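/- Let N be a Poisson(μ) random variable with μ ≥ 0; let X₁, X₂, … be i.i.d. real-valued random variables with common law ν (a probability measure on ℝ); let g, h₁, h₂, … be i.i.d. random variables with the exponential distribution of rate 1; assume N, (X_i), (h_i), g are all mutually independent; let θ ≥ 0 and let c : ℝ → [0,∞) be measurable. Then P(g ≥ θ·Σ_{k=1}^{N} c(X_k)·h_k) = exp(−μ·∫_ℝ θ·c(x)/(1 + θ·c(x)) dν(x)), where the empty sum (when N = 0) equals 0. -/

import Mathlib

open MeasureTheory ProbabilityTheory

/-- Index type collecting the interferer locations `X k`, the interferer fading gains `H k`,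
the desired-signal fading gain `G`, and the number of interferers `N`. -/
inductive MixIdx where
  | X (k : ℕ)
  | H (k : ℕ)
  | G
  | N

/-- The codomain of each random variable in the family indexed by `MixIdx`. -/
def MixIdx.type : MixIdx → Type
  | .X _ => ℝ
  | .H _ => ℝ
  | .G => ℝ
  | .N => ℕ

instance (i : MixIdx) : MeasurableSpace i.type := by
  cases i <;> (dsimp [MixIdx.type]; infer_instance)

/-- The family of random variables `(X k)`, `(h k)`, `g`, `N` indexed by `MixIdx`. -/
def mixFam {Ω : Type*} (N : Ω → ℕ) (X h : ℕ → Ω → ℝ) (g : Ω → ℝ) :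
    ∀ i : MixIdx, Ω → i.type
  | .X k => X k
  | .H k => h k
  | .G => g
  | .N => N

section Aux
open Real Set

lemma expM_def : expMeasure 1 = volume.withDensity (exponentialPDF 1) := rfl

lemma measurable_expPDF (r : ℝ) : Measurable (exponentialPDF r) :=
  ENNReal.measurable_ofReal.comp (measurable_exponentialPDFReal r)

lemma exp_lintegral (a : ℝ) (ha : 0 ≤ a) :
    ∫⁻ y, ENNReal.ofReal (Real.exp (-(a * y))) ∂(expMeasure 1) = ENNReal.ofReal (1 / (1 + a)) := by
  have h1a : (0:ℝ) < 1 + a := by linarith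
  have hf : Measurable fun y : ℝ => ENNReal.ofReal (Real.exp (-(a * y))) :=
    (((measurable_const_mul a).neg).exp).ennreal_ofReal
  rw [expM_def, lintegral_withDensity_eq_lintegral_mul _ (measurable_expPDF 1) hf]
  have hpt : ∀ y : ℝ, (exponentialPDF 1 * fun y => ENNReal.ofReal (Real.exp (-(a * y)))) y
      = ENNReal.ofReal (1 / (1 + a)) * exponentialPDF (1 + a) y := by
    intro y
    rcases lt_or_ge y 0 with hy | hy
    · simp [Pi.mul_apply, exponentialPDF_of_neg hy]
    · rw [Pi.mul_apply, exponentialPDF_of_nonneg hy, exponentialPDF_of_nonneg hy,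
        ← ENNReal.ofReal_mul (by positivity), ← ENNReal.ofReal_mul (by positivity)]
      congr 1
      rw [one_mul, ← Real.exp_add]
      rw [show 1 / (1 + a) * ((1 + a) * Real.exp (-((1 + a) * y)))
          = Real.exp (-((1 + a) * y)) by field_simp]
      congr 1
      ring
  rw [lintegral_congr hpt, lintegral_const_mul _ (measurable_expPDF (1 + a)),
    lintegral_exponentialPDF_eq_one h1a, mul_one]

lemma expM_singleton (t : ℝ) : expMeasure 1 {t} = 0 := by
  rw [expM_def, withDensity_apply _ (measurableSet_singleton t),
    Measure.restrict_eq_zero.mpr (by simp), lintegral_zero_measure]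

lemma expM_Ici (t : ℝ) (ht : 0 ≤ t) :
    expMeasure 1 (Set.Ici t) = ENNReal.ofReal (Real.exp (-t)) := by
  haveI : IsProbabilityMeasure (expMeasure 1) := isProbabilityMeasure_expMeasure one_pos
  have hIic : expMeasure 1 (Set.Iic t) = ENNReal.ofReal (1 - Real.exp (-t)) := by
    rw [expM_def, withDensity_apply _ measurableSet_Iic,
      lintegral_exponentialPDF_eq_antiDeriv one_pos, if_pos ht, one_mul]
  have hIio : expMeasure 1 (Set.Iio t) = ENNReal.ofReal (1 - Real.exp (-t)) := by
    rw [← Set.Iic_diff_right, measure_diff_null (expM_singleton t), hIic]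
  have hc := measure_compl (μ := expMeasure 1) measurableSet_Iio (measure_ne_top _ (Set.Iio t))
  rw [Set.compl_Iio] at hc
  rw [hc, hIio, measure_univ]
  have hle : Real.exp (-t) ≤ 1 := Real.exp_le_one_iff.mpr (neg_nonpos.mpr ht)
  rw [ENNReal.sub_eq_of_eq_add (by simp)]
  rw [← ENNReal.ofReal_add (by positivity) (by linarith), ← ENNReal.ofReal_one]
  congr 1
  ring

lemma expM_Ici_max (t : ℝ) :
    expMeasure 1 (Set.Ici t) = ENNReal.ofReal (Real.exp (-(max t 0))) := by
  haveI : IsProbabilityMeasure (expMeasure 1) := isProbabilityMeasure_expMeasure one_pos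
  rcases le_or_gt 0 t with ht | ht
  · rw [max_eq_left ht, expM_Ici t ht]
  · rw [max_eq_right ht.le]
    have h1 : expMeasure 1 (Set.Ici (0:ℝ)) ≤ expMeasure 1 (Set.Ici t) :=
      measure_mono (Set.Ici_subset_Ici.mpr ht.le)
    rw [expM_Ici 0 le_rfl] at h1
    simp only [neg_zero, Real.exp_zero, ENNReal.ofReal_one] at h1 ⊢
    exact le_antisymm prob_le_one h1

end Aux

/-- If `N` is Poisson(`μ`), the `X k` are i.i.d. with common law `ν`, `g` and the `h k` are
i.i.d. exponential with rate 1, all mutually independent, `θ ≥ 0` and `c : ℝ → [0,∞)` is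
measurable, then `P(g ≥ θ Σ_{k<N} c (X k) · h k) = exp (-μ ∫ θ c x / (1 + θ c x) dν(x))`. -/
theorem stmt_9 {Ω : Type*} [MeasurableSpace Ω] (P : Measure Ω) [IsProbabilityMeasure P]
    (μ : ℝ) (hμ : 0 ≤ μ) (ν : Measure ℝ) [IsProbabilityMeasure ν]
    (N : Ω → ℕ) (X h : ℕ → Ω → ℝ) (g : Ω → ℝ)
    (hN : Measurable N) (hX : ∀ k, Measurable (X k))
    (hh : ∀ k, Measurable (h k)) (hg : Measurable g)
    (hNlaw : Measure.map N P = poissonMeasure μ.toNNReal)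
    (hXlaw : ∀ k, Measure.map (X k) P = ν)
    (hhlaw : ∀ k, Measure.map (h k) P = expMeasure 1)
    (hglaw : Measure.map g P = expMeasure 1)
    (hindep : iIndepFun (mixFam N X h g) P)
    (θ : ℝ) (hθ : 0 ≤ θ) (c : ℝ → ℝ) (hc : Measurable c) (hc0 : ∀ x, 0 ≤ c x) :
    P {ω | θ * ∑ k ∈ Finset.range (N ω), c (X k ω) * h k ω ≤ g ω} =
      ENNReal.ofReal (Real.exp (-(μ * ∫ x, θ * c x / (1 + θ * c x) ∂ν))) := by
  classical
  haveI : IsProbabilityMeasure (expMeasure 1) := isProbabilityMeasure_expMeasure one_pos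
  have hfmeas : ∀ i, Measurable (mixFam N X h g i) := by
    intro i
    cases i with
    | X k => exact hX k
    | H k => exact hh k
    | G => exact hg
    | N => exact hN
  -- basic objects
  set Sf : ℕ → Ω → ℝ := fun n ω => ∑ k ∈ Finset.range n, c (X k ω) * h k ω with hSfdef
  have hSmeas : ∀ n, Measurable (Sf n) := fun n =>
    Finset.measurable_sum _ fun k _ => (hc.comp (hX k)).mul (hh k)
  set Y : ℕ → Ω → ENNReal := fun k ω => ENNReal.ofReal (Real.exp (-(θ * (c (X k ω) * h k ω))))
    with hYdef
  have hYmeas : ∀ k, Measurable (Y k) := fun k =>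
    ((((hc.comp (hX k)).mul (hh k)).const_mul θ).neg.exp).ennreal_ofReal
  -- positivity facts about the integrand
  have hpos : ∀ x : ℝ, (0:ℝ) < 1 + θ * c x := fun x => by
    have := mul_nonneg hθ (hc0 x); linarith
  -- the single-factor integral value
  set R : ENNReal := ∫⁻ x, ENNReal.ofReal (1 / (1 + θ * c x)) ∂ν with hRdef
  have hYint : ∀ k, ∫⁻ ω, Y k ω ∂P = R := by
    intro k
    have hindep_pair : IndepFun (X k) (h k) P :=
      hindep.indepFun (i := .X k) (j := .H k) (by simp)
    have hpm : Measurable fun ω => (X k ω, h k ω) := (hX k).prodMk (hh k)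
    have hFmeas : Measurable fun p : ℝ × ℝ => ENNReal.ofReal (Real.exp (-(θ * (c p.1 * p.2)))) :=
      ((((hc.comp measurable_fst).mul measurable_snd).const_mul θ).neg.exp).ennreal_ofReal
    have hmap : P.map (fun ω => (X k ω, h k ω)) = ν.prod (expMeasure 1) := by
      rw [(indepFun_iff_map_prod_eq_prod_map_map (hX k).aemeasurable
        (hh k).aemeasurable).mp hindep_pair, hXlaw k, hhlaw k]
    calc ∫⁻ ω, Y k ω ∂P
        = ∫⁻ p, ENNReal.ofReal (Real.exp (-(θ * (c p.1 * p.2))))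
            ∂(P.map fun ω => (X k ω, h k ω)) := (lintegral_map hFmeas hpm).symm
      _ = ∫⁻ x, ∫⁻ y, ENNReal.ofReal (Real.exp (-(θ * (c x * y)))) ∂(expMeasure 1) ∂ν := by
          rw [hmap, lintegral_prod _ hFmeas.aemeasurable]
      _ = R := by
          rw [hRdef]
          refine lintegral_congr fun x => ?_
          have := exp_lintegral (θ * c x) (mul_nonneg hθ (hc0 x))
          simp_rw [mul_assoc] at this
          exact this
  -- independence: product of first n factors vs n-th factor
  set SXH : ℕ → Finset MixIdx :=
    fun n => (Finset.range n).image MixIdx.X ∪ (Finset.range n).image MixIdx.H with hSXH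
  have hmemX : ∀ {n k : ℕ}, k ∈ Finset.range n → MixIdx.X k ∈ SXH n := fun hk =>
    Finset.mem_union_left _ (Finset.mem_image_of_mem _ hk)
  have hmemH : ∀ {n k : ℕ}, k ∈ Finset.range n → MixIdx.H k ∈ SXH n := fun hk =>
    Finset.mem_union_right _ (Finset.mem_image_of_mem _ hk)
  have hindepProd : ∀ n, IndepFun (fun ω => ∏ k ∈ Finset.range n, Y k ω) (Y n) P := by
    intro n
    have hdisj : Disjoint (SXH n) ({MixIdx.X n, MixIdx.H n} : Finset MixIdx) := by
      simp only [Finset.disjoint_left, hSXH, Finset.mem_union, Finset.mem_image,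
        Finset.mem_range, Finset.mem_insert, Finset.mem_singleton]
      rintro a (⟨k, hk, rfl⟩ | ⟨k, hk, rfl⟩) (hx | hx) <;> simp_all
    have h0 := hindep.indepFun_finset (SXH n) {MixIdx.X n, MixIdx.H n} hdisj hfmeas
    set φ : (∀ i : (SXH n : Finset MixIdx), MixIdx.type i) → ENNReal := fun v =>
      ∏ k ∈ (Finset.range n).attach,
        ENNReal.ofReal (Real.exp (-(θ * (c (id (α := ℝ) (v ⟨MixIdx.X k.1, hmemX k.2⟩))
          * id (α := ℝ) (v ⟨MixIdx.H k.1, hmemH k.2⟩))))) with hφdef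
    set ψ : (∀ i : ({MixIdx.X n, MixIdx.H n} : Finset MixIdx), MixIdx.type i) → ENNReal :=
      fun v => ENNReal.ofReal (Real.exp (-(θ * (c (id (α := ℝ) (v ⟨MixIdx.X n, by simp⟩))
        * id (α := ℝ) (v ⟨MixIdx.H n, by simp⟩))))) with hψdef
    have hφ : Measurable φ := Finset.measurable_prod _ fun k _ =>
      ((((hc.comp (measurable_pi_apply _)).mul (measurable_pi_apply _)).const_mul
        θ).neg.exp).ennreal_ofReal
    have hψ : Measurable ψ :=
      ((((hc.comp (measurable_pi_apply _)).mul (measurable_pi_apply _)).const_mul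
        θ).neg.exp).ennreal_ofReal
    have h1 : (fun ω => ∏ k ∈ Finset.range n, Y k ω)
        = φ ∘ (fun ω (i : (SXH n : Finset MixIdx)) => mixFam N X h g i ω) := by
      funext ω
      exact (Finset.prod_attach (Finset.range n) (fun k => Y k ω)).symm
    have h2 : Y n = ψ ∘ (fun ω (i : ({MixIdx.X n, MixIdx.H n} : Finset MixIdx))
        => mixFam N X h g i ω) := rfl
    rw [h1, h2]
    exact h0.comp hφ hψ
  -- the product integral
  have hprod : ∀ n, ∫⁻ ω, ∏ k ∈ Finset.range n, Y k ω ∂P = R ^ n := by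
    intro n
    induction n with
    | zero => simp
    | succ n ih =>
      have hmul : ∫⁻ ω, ((fun ω => ∏ k ∈ Finset.range n, Y k ω) * Y n) ω ∂P
          = (∫⁻ ω, ∏ k ∈ Finset.range n, Y k ω ∂P) * ∫⁻ ω, Y n ω ∂P :=
        lintegral_mul_eq_lintegral_mul_lintegral_of_indepFun
          (Finset.measurable_prod _ fun k _ => hYmeas k) (hYmeas n) (hindepProd n)
      calc ∫⁻ ω, ∏ k ∈ Finset.range (n + 1), Y k ω ∂P
          = ∫⁻ ω, ((fun ω => ∏ k ∈ Finset.range n, Y k ω) * Y n) ω ∂P := by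
            refine lintegral_congr fun ω => ?_
            simp [Finset.prod_range_succ]
        _ = R ^ n * R := by rw [hmul, ih, hYint n]
        _ = R ^ (n + 1) := (pow_succ R n).symm
  -- a.e. nonnegativity of the fading gains
  have hhae : ∀ᵐ ω ∂P, ∀ k, 0 ≤ h k ω := by
    rw [ae_all_iff]
    intro k
    have h0 : P (h k ⁻¹' Set.Iio 0) = 0 := by
      rw [← Measure.map_apply (hh k) measurableSet_Iio, hhlaw k, expM_def,
        withDensity_apply _ measurableSet_Iio, lintegral_exponentialPDF_of_nonpos le_rfl]
    have hset : {ω | ¬ 0 ≤ h k ω} = h k ⁻¹' Set.Iio 0 := by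
      ext ω; simp [not_le]
    rw [ae_iff, hset]
    exact h0
  have hIciMeas : Measurable fun t : ℝ => expMeasure 1 (Set.Ici t) := by
    simp_rw [expM_Ici_max]
    exact (((measurable_id.max measurable_const).neg).exp).ennreal_ofReal
  have hC : MeasurableSet {p : ℝ × ℝ | p.1 ≤ p.2} :=
    measurableSet_le measurable_fst measurable_snd
  -- independence of θ * Sf n and g
  have hindepTg : ∀ n, IndepFun (fun ω => θ * Sf n ω) g P := by
    intro n
    have hdisj : Disjoint (SXH n) ({MixIdx.G} : Finset MixIdx) := by
      simp only [Finset.disjoint_left, hSXH, Finset.mem_union, Finset.mem_image,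
        Finset.mem_range, Finset.mem_singleton]
      rintro a (⟨k, hk, rfl⟩ | ⟨k, hk, rfl⟩) hx <;> simp_all
    have h0 := hindep.indepFun_finset (SXH n) {MixIdx.G} hdisj hfmeas
    set φ : (∀ i : (SXH n : Finset MixIdx), MixIdx.type i) → ℝ := fun v =>
      θ * ∑ k ∈ (Finset.range n).attach,
        c (id (α := ℝ) (v ⟨MixIdx.X k.1, hmemX k.2⟩))
          * id (α := ℝ) (v ⟨MixIdx.H k.1, hmemH k.2⟩) with hφdef
    set ψ : (∀ i : (({MixIdx.G} : Finset MixIdx) : Finset MixIdx), MixIdx.type i) → ℝ :=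
      fun v => id (α := ℝ) (v ⟨MixIdx.G, by simp⟩) with hψdef
    have hφ : Measurable φ :=
      (Finset.measurable_sum _ fun k _ =>
        (hc.comp (measurable_pi_apply _)).mul (measurable_pi_apply _)).const_mul θ
    have hψ : Measurable ψ := measurable_pi_apply _
    have h1 : (fun ω => θ * Sf n ω)
        = φ ∘ (fun ω (i : (SXH n : Finset MixIdx)) => mixFam N X h g i ω) := by
      funext ω
      show θ * Sf n ω = θ * ∑ k ∈ (Finset.range n).attach, c (X k.1 ω) * h k.1 ω
      rw [Finset.sum_attach (Finset.range n) (fun k => c (X k ω) * h k ω)]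
    have h2 : g = ψ ∘ (fun ω (i : (({MixIdx.G} : Finset MixIdx) : Finset MixIdx))
        => mixFam N X h g i ω) := rfl
    rw [h1, h2]
    exact h0.comp hφ hψ
  -- independence of N and (θ * Sf n, g)
  have hindepNV : ∀ n, IndepFun N (fun ω => (θ * Sf n ω, g ω)) P := by
    intro n
    have hdisj : Disjoint ({MixIdx.N} : Finset MixIdx) (SXH n ∪ {MixIdx.G}) := by
      simp only [Finset.disjoint_left, hSXH, Finset.mem_union, Finset.mem_image,
        Finset.mem_range, Finset.mem_singleton]
      rintro a rfl h
      rcases h with (⟨k, hk, hx⟩ | ⟨k, hk, hx⟩) | hx <;> simp_all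
    have h0 := hindep.indepFun_finset {MixIdx.N} (SXH n ∪ {MixIdx.G}) hdisj hfmeas
    set φ : (∀ i : (({MixIdx.N} : Finset MixIdx) : Finset MixIdx), MixIdx.type i) → ℕ :=
      fun v => id (α := ℕ) (v ⟨MixIdx.N, by simp⟩) with hφdef
    set ψ : (∀ i : ((SXH n ∪ {MixIdx.G} : Finset MixIdx) : Finset MixIdx), MixIdx.type i)
        → ℝ × ℝ := fun v =>
      (θ * ∑ k ∈ (Finset.range n).attach,
        c (id (α := ℝ) (v ⟨MixIdx.X k.1, Finset.mem_union_left _ (hmemX k.2)⟩))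
          * id (α := ℝ) (v ⟨MixIdx.H k.1, Finset.mem_union_left _ (hmemH k.2)⟩),
        id (α := ℝ) (v ⟨MixIdx.G, Finset.mem_union_right _ (Finset.mem_singleton_self _)⟩))
      with hψdef
    have hφ : Measurable φ := measurable_pi_apply _
    have hψ : Measurable ψ :=
      ((Finset.measurable_sum _ fun k _ =>
        (hc.comp (measurable_pi_apply _)).mul (measurable_pi_apply _)).const_mul θ).prodMk
        (measurable_pi_apply _)
    have h1 : N = φ ∘ (fun ω (i : (({MixIdx.N} : Finset MixIdx) : Finset MixIdx))
        => mixFam N X h g i ω) := rfl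
    have h2 : (fun ω => (θ * Sf n ω, g ω))
        = ψ ∘ (fun ω (i : ((SXH n ∪ {MixIdx.G} : Finset MixIdx) : Finset MixIdx))
          => mixFam N X h g i ω) := by
      funext ω
      show (θ * Sf n ω, g ω)
        = (θ * ∑ k ∈ (Finset.range n).attach, c (X k.1 ω) * h k.1 ω, g ω)
      rw [Finset.sum_attach (Finset.range n) (fun k => c (X k ω) * h k ω)]
    rw [h1, h2]
    exact h0.comp hφ hψ
  -- probability of each conditional event
  have hBn : ∀ n, P {ω | θ * Sf n ω ≤ g ω} = R ^ n := by
    intro n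
    have hTm : Measurable fun ω => θ * Sf n ω := (hSmeas n).const_mul θ
    have hmapT : P.map (fun ω => (θ * Sf n ω, g ω))
        = (P.map fun ω => θ * Sf n ω).prod (expMeasure 1) := by
      rw [(indepFun_iff_map_prod_eq_prod_map_map hTm.aemeasurable hg.aemeasurable).mp
        (hindepTg n), hglaw]
    haveI : IsProbabilityMeasure (P.map fun ω => θ * Sf n ω) :=
      Measure.isProbabilityMeasure_map hTm.aemeasurable
    calc P {ω | θ * Sf n ω ≤ g ω}
        = (P.map fun ω => (θ * Sf n ω, g ω)) {p : ℝ × ℝ | p.1 ≤ p.2} := by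
          rw [Measure.map_apply (hTm.prodMk hg) hC]
          rfl
      _ = ∫⁻ t, expMeasure 1 (Set.Ici t) ∂(P.map fun ω => θ * Sf n ω) := by
          rw [hmapT, Measure.prod_apply hC]
          rfl
      _ = ∫⁻ ω, expMeasure 1 (Set.Ici (θ * Sf n ω)) ∂P := lintegral_map hIciMeas hTm
      _ = ∫⁻ ω, ∏ k ∈ Finset.range n, Y k ω ∂P := by
          refine lintegral_congr_ae ?_
          filter_upwards [hhae] with ω hω
          have hT0 : 0 ≤ θ * Sf n ω := mul_nonneg hθ
            (Finset.sum_nonneg fun k _ => mul_nonneg (hc0 _) (hω k))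
          rw [expM_Ici _ hT0]
          have hexp : -(θ * Sf n ω) = ∑ k ∈ Finset.range n, -(θ * (c (X k ω) * h k ω)) := by
            simp only [hSfdef, Finset.mul_sum, Finset.sum_neg_distrib]
          rw [hexp, Real.exp_sum, ENNReal.ofReal_prod_of_nonneg
            (fun k _ => (Real.exp_pos _).le)]
      _ = R ^ n := hprod n
  -- decomposition over the value of N
  have hAset : {ω | θ * ∑ k ∈ Finset.range (N ω), c (X k ω) * h k ω ≤ g ω}
      = ⋃ n, N ⁻¹' {n} ∩ {ω | θ * Sf n ω ≤ g ω} := by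
    ext ω
    simp only [Set.mem_setOf_eq, Set.mem_iUnion, Set.mem_inter_iff, Set.mem_preimage,
      Set.mem_singleton_iff, hSfdef]
    constructor
    · intro hω; exact ⟨N ω, rfl, hω⟩
    · rintro ⟨n, hn, hω⟩; subst hn; exact hω
  have hmeasPiece : ∀ n, MeasurableSet (N ⁻¹' {n} ∩ {ω | θ * Sf n ω ≤ g ω}) := fun n =>
    (hN (measurableSet_singleton n)).inter (measurableSet_le ((hSmeas n).const_mul θ) hg)
  have hNdis : Pairwise (Function.onFun Disjoint
      fun n => N ⁻¹' {n} ∩ {ω | θ * Sf n ω ≤ g ω}) := by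
    intro i j hij
    refine Set.disjoint_left.mpr ?_
    rintro ω ⟨hi, -⟩ ⟨hj, -⟩
    exact hij ((Set.mem_singleton_iff.mp hi).symm.trans (Set.mem_singleton_iff.mp hj))
  have hpiece : ∀ n, P (N ⁻¹' {n} ∩ {ω | θ * Sf n ω ≤ g ω}) = P (N ⁻¹' {n}) * R ^ n := by
    intro n
    have hmul := (hindepNV n).measure_inter_preimage_eq_mul {n} {p : ℝ × ℝ | p.1 ≤ p.2}
      (measurableSet_singleton n) hC
    rw [show (fun ω => (θ * Sf n ω, g ω)) ⁻¹' {p : ℝ × ℝ | p.1 ≤ p.2}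
      = {ω | θ * Sf n ω ≤ g ω} from rfl] at hmul
    rw [hmul, hBn n]
  -- Poisson masses
  have hPN : ∀ n, P (N ⁻¹' {n}) = ENNReal.ofReal (poissonPMFReal μ.toNNReal n) := by
    intro n
    rw [← Measure.map_apply hN (measurableSet_singleton n), hNlaw,
      poissonMeasure_singleton]
    rfl
  -- the real-valued single-factor integral
  set r : ℝ := ∫ x, 1 / (1 + θ * c x) ∂ν with hrdef
  have hfm : Measurable fun x => 1 / (1 + θ * c x) :=
    measurable_const.div (measurable_const.add (hc.const_mul θ))
  have hint : Integrable (fun x => 1 / (1 + θ * c x)) ν := by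
    refine Integrable.mono' (integrable_const 1) hfm.aestronglyMeasurable
      (ae_of_all _ fun x => ?_)
    rw [Real.norm_eq_abs, abs_of_nonneg (div_nonneg zero_le_one (hpos x).le)]
    rw [div_le_one (hpos x)]
    linarith [mul_nonneg hθ (hc0 x)]
  have hr0 : 0 ≤ r := integral_nonneg fun x => div_nonneg zero_le_one (hpos x).le
  have hR : R = ENNReal.ofReal r := by
    rw [hRdef, hrdef]
    exact (ofReal_integral_eq_lintegral_ofReal hint (ae_of_all _ fun x => div_nonneg zero_le_one (hpos x).le)).symm
  have hr1 : r ≤ 1 := by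
    rw [hrdef]
    calc ∫ x, 1 / (1 + θ * c x) ∂ν ≤ ∫ _x, (1:ℝ) ∂ν := by
          refine integral_mono hint (integrable_const 1) fun x => ?_
          rw [div_le_one (hpos x)]
          linarith [mul_nonneg hθ (hc0 x)]
      _ = 1 := by simp
  -- integral identity for the target exponent
  have hIr : ∫ x, θ * c x / (1 + θ * c x) ∂ν = 1 - r := by
    have hpt : ∀ x : ℝ, θ * c x / (1 + θ * c x) = 1 - 1 / (1 + θ * c x) := by
      intro x
      have h0 := (hpos x).ne'
      field_simp
      ring
    rw [integral_congr_ae (ae_of_all _ hpt), integral_sub (integrable_const 1) hint]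
    simp [hrdef]
  -- summing up
  have hμc : ((μ.toNNReal : ℝ)) = μ := Real.coe_toNNReal μ hμ
  have hμr : 0 ≤ μ * r := mul_nonneg hμ hr0
  have hterm : ∀ n : ℕ, P (N ⁻¹' {n}) * R ^ n
      = ENNReal.ofReal (Real.exp (-μ) * ((μ * r) ^ n / n.factorial)) := by
    intro n
    rw [hPN n, hR, ← ENNReal.ofReal_pow hr0, ← ENNReal.ofReal_mul poissonPMFReal_nonneg]
    congr 1
    rw [poissonPMFReal, hμc, mul_pow]
    ring
  have hsummable : Summable fun n : ℕ => Real.exp (-μ) * ((μ * r) ^ n / n.factorial) :=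
    (Real.summable_pow_div_factorial (μ * r)).mul_left _
  rw [hAset, measure_iUnion hNdis hmeasPiece]
  calc ∑' n, P (N ⁻¹' {n} ∩ {ω | θ * Sf n ω ≤ g ω})
      = ∑' n, ENNReal.ofReal (Real.exp (-μ) * ((μ * r) ^ n / n.factorial)) := by
        refine tsum_congr fun n => ?_
        rw [hpiece n, hterm n]
    _ = ENNReal.ofReal (∑' n : ℕ, Real.exp (-μ) * ((μ * r) ^ n / n.factorial)) :=
        (ENNReal.ofReal_tsum_of_nonneg (fun n => mul_nonneg (Real.exp_pos _).le
          (div_nonneg (pow_nonneg hμr n) (Nat.cast_nonneg _))) hsummable).symm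
    _ = ENNReal.ofReal (Real.exp (-(μ * ∫ x, θ * c x / (1 + θ * c x) ∂ν))) := by
        congr 1
        rw [tsum_mul_left]
        have hexp : ∑' n : ℕ, (μ * r) ^ n / (n.factorial : ℝ) = Real.exp (μ * r) := by
          rw [Real.exp_eq_exp_ℝ, NormedSpace.exp_eq_tsum_div]
        rw [hexp, ← Real.exp_add, hIr]
        congr 1
        ring
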